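/- Section property: Let i ∈ 𝕊², let (k,l) ∈ T, and let f ∈ A_i(𝔹⁴). Then P_{𝔹⁴}(S_{k,l}[f]) = f; explicitly, P_{k,l}[ D₁[f,k,l] + D₂[f,k,l] k + D₃[f,k,l] l + D₄[f,k,l] kl ] = f as functions on 𝔹⁴. Hence S_{k,l} is a section of the projection P_{𝔹⁴} : HL(D) → A_i(𝔹⁴). -/

import Mathlib

noncomputable section

open MeasureTheory Filter

notation "ℍ" => Quaternion ℝ

/-- The set of pure imaginary unit quaternions `𝕊²`. -/
def Sph2 (i : ℍ) : Prop := i.re = 0 ∧ ‖i‖ = 1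

/-- Ordered pairs of orthogonal pure imaginary unit quaternions (the set `T`). -/
def OrthPair (i j : ℍ) : Prop := Sph2 i ∧ Sph2 j ∧ (i * star j).re = 0

/-- The slice complex plane `ℂ(i) = {x + y i}`. -/
def CC (i : ℍ) : Set ℍ := {q | ∃ x y : ℝ, q = (x : ℍ) + y • i}

/-- Slice regularity of `f` on `Ω`: real differentiability together with the
Cauchy–Riemann condition `½(∂/∂x + i ∂/∂y) f = 0` on every slice. -/
def SliceRegularOn (f : ℍ → ℍ) (Ω : Set ℍ) : Prop :=
  ∀ ⦃i : ℍ⦄, Sph2 i → ∀ x y : ℝ, ((x : ℍ) + y • i) ∈ Ω →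
    DifferentiableAt ℝ f ((x : ℍ) + y • i) ∧
    fderiv ℝ f ((x : ℍ) + y • i) 1 + i * fderiv ℝ f ((x : ℍ) + y • i) i = 0

/-- Axially symmetric slice domain. -/
structure AxSymSDomain (Ω : Set ℍ) : Prop where
  isOpen : IsOpen Ω
  isConnected : IsConnected Ω
  real_nonempty : (Ω ∩ Set.range ((↑) : ℝ → ℍ)).Nonempty
  slice_connected : ∀ ⦃i : ℍ⦄, Sph2 i →
    IsConnected {p : ℝ × ℝ | ((p.1 : ℍ) + p.2 • i) ∈ Ω}
  axial : ∀ (x y : ℝ) ⦃i : ℍ⦄, Sph2 i → ((x : ℍ) + y • i) ∈ Ω →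
    ∀ ⦃j : ℍ⦄, Sph2 j → ((x : ℍ) + y • j) ∈ Ω

/-- The slice `Ω ∩ ℂ(i)` as a subset of `ℝ²`. -/
def sliceSet (Ω : Set ℍ) (i : ℍ) : Set (ℝ × ℝ) := {p | ((p.1 : ℍ) + p.2 • i) ∈ Ω}

/-- `‖f‖²_{A_i(Ω)} = ∫_{Ω ∩ ℂ(i)} ‖f‖² dσ_i`. -/
def bergmanNormSq (Ω : Set ℍ) (i : ℍ) (f : ℍ → ℍ) : ℝ :=
  ∫ p in sliceSet Ω i, ‖f ((p.1 : ℍ) + p.2 • i)‖ ^ 2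

/-- The slice regular Bergman norm `‖f‖_{A_i(Ω)}`. -/
def bergmanNorm (Ω : Set ℍ) (i : ℍ) (f : ℍ → ℍ) : ℝ :=
  Real.sqrt (bergmanNormSq Ω i f)

/-- Membership in the slice regular Bergman space `A_i(Ω)`. -/
def MemBergman (Ω : Set ℍ) (i : ℍ) (f : ℍ → ℍ) : Prop :=
  SliceRegularOn f Ω ∧
  IntegrableOn (fun p : ℝ × ℝ => ‖f ((p.1 : ℍ) + p.2 • i)‖ ^ 2) (sliceSet Ω i)

/-- The quaternionic Bergman inner product `⟨f,g⟩ = ∫ conj(f) g dσ_i`. -/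
def bergmanInner (Ω : Set ℍ) (i : ℍ) (f g : ℍ → ℍ) : ℍ :=
  ∫ p in sliceSet Ω i, star (f ((p.1 : ℍ) + p.2 • i)) * g ((p.1 : ℍ) + p.2 • i)

/-- The open unit ball `𝔹⁴ ⊆ ℍ`. -/
def B4 : Set ℍ := {q | ‖q‖ < 1}

/-- The open unit disk `D ⊆ ℝ²`. -/
def unitDisk : Set (ℝ × ℝ) := {p | p.1 ^ 2 + p.2 ^ 2 < 1}

/-- `‖f‖²_{A_i(𝔹⁴)} = ∫_D ‖f(x + yi)‖² dμ(x,y)`. -/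
def bergNormSqB (i : ℍ) (f : ℍ → ℍ) : ℝ :=
  ∫ p in unitDisk, ‖f ((p.1 : ℍ) + p.2 • i)‖ ^ 2

/-- The Bergman norm on `A_i(𝔹⁴)`. -/
def bergNormB (i : ℍ) (f : ℍ → ℍ) : ℝ := Real.sqrt (bergNormSqB i f)

/-- Membership in `A_i(𝔹⁴)`. -/
def MemBergB (i : ℍ) (f : ℍ → ℍ) : Prop :=
  SliceRegularOn f B4 ∧
  IntegrableOn (fun p : ℝ × ℝ => ‖f ((p.1 : ℍ) + p.2 • i)‖ ^ 2) unitDisk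

open Classical in
/-- `I_q`: the imaginary unit direction of `q` (an arbitrary fixed unit when `q` is real). -/
def Imu (q : ℍ) : ℍ := if q.im = 0 then ⟨0, 1, 0, 0⟩ else ‖q.im‖⁻¹ • q.im

/-- The extension operator `P_{k,·}`: for a slice function `g : ℝ² → ℍ` (representing
`x + y k ↦ g(x,y)`), `Pext k g (q) = ½[(1 + I_q k) g(x, −y) + (1 − I_q k) g(x, y)]`
where `q = x + I_q y`, `y = ‖im q‖ ≥ 0`. -/
def Pext (k : ℍ) (g : ℝ × ℝ → ℍ) (q : ℍ) : ℍ :=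
  (2⁻¹ : ℝ) • ((1 + Imu q * k) * g (q.re, -‖q.im‖) + (1 - Imu q * k) * g (q.re, ‖q.im‖))

/-- The slice function `x + y k ↦ a + b k + c l + d kl`. -/
def sliceFun (a b c d : ℝ × ℝ → ℝ) (k l : ℍ) (p : ℝ × ℝ) : ℍ :=
  (a p : ℍ) + b p • k + c p • l + d p • (k * l)

/-- `L²(D)` norm of a real function on the unit disk. -/
def L2D (a : ℝ × ℝ → ℝ) : ℝ := Real.sqrt (∫ p in unitDisk, a p ^ 2)

/-- Finiteness of the `L²(D)` norm. -/
def MemL2D (a : ℝ × ℝ → ℝ) : Prop := IntegrableOn (fun p => a p ^ 2) unitDisk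

/-- Harmonicity on the unit disk: `a` is `C²` and `∂²a/∂x² + ∂²a/∂y² = 0`. -/
def HarmonicOnDisk (a : ℝ × ℝ → ℝ) : Prop :=
  ContDiffOn ℝ 2 a unitDisk ∧ ∀ p ∈ unitDisk,
    fderiv ℝ (fun q => fderiv ℝ a q (1, 0)) p (1, 0)
      + fderiv ℝ (fun q => fderiv ℝ a q (0, 1)) p (0, 1) = 0

/-- `(a,b)` is a pair of conjugate harmonic functions on `D`:
both harmonic and satisfying the Cauchy–Riemann equations. -/
def ConjHarmPair (a b : ℝ × ℝ → ℝ) : Prop :=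
  HarmonicOnDisk a ∧ HarmonicOnDisk b ∧
  ∀ p ∈ unitDisk,
    fderiv ℝ a p (1, 0) = fderiv ℝ b p (0, 1) ∧
    fderiv ℝ a p (0, 1) = -fderiv ℝ b p (1, 0)

/-- `(a,b) ∈ HL²(D)`. -/
def HLpair (a b : ℝ × ℝ → ℝ) : Prop := ConjHarmPair a b ∧ MemL2D a ∧ MemL2D b

/-- Raw data of an element of `HL(D)`: a 2×2 matrix `(a b; c d)` of real functions
on the disk together with a pair `(k,l)` of quaternions. -/
structure HLElem where
  a : ℝ × ℝ → ℝ
  b : ℝ × ℝ → ℝ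
  c : ℝ × ℝ → ℝ
  d : ℝ × ℝ → ℝ
  k : ℍ
  l : ℍ

/-- Membership in `HL(D)`: `(a,b),(c,d) ∈ HL²(D)` and `(k,l) ∈ T`. -/
def HLElem.mem (A : HLElem) : Prop := HLpair A.a A.b ∧ HLpair A.c A.d ∧ OrthPair A.k A.l

/-- The bundle projection `P_{𝔹⁴}((a b; c d),(k,l)) = P_{k,l}[a + bk + cl + dkl]`. -/
def HLElem.proj (A : HLElem) : ℍ → ℍ := Pext A.k (sliceFun A.a A.b A.c A.d A.k A.l)

/-- The metric of `HL(D)`. -/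
def HLdist (A B : HLElem) : ℝ :=
  L2D (A.a - B.a) + L2D (A.b - B.b) + L2D (A.c - B.c) + L2D (A.d - B.d)
    + Real.sqrt (‖A.k - B.k‖ ^ 2 + ‖A.l - B.l‖ ^ 2)

/-- `Q_{k,l}[f] : (x,y) ↦ f(x + y k)`, the restriction of `f` to the slice `ℂ(k)`. -/
def Qsl (f : ℍ → ℍ) (k : ℍ) (p : ℝ × ℝ) : ℍ := f ((p.1 : ℍ) + p.2 • k)

/-- `D₁[f,k,l] = (Q[f] + conj(Q[f]))/2 = Re (Q[f])`. -/
def Dc1 (f : ℍ → ℍ) (k _l : ℍ) (p : ℝ × ℝ) : ℝ := (Qsl f k p).re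

/-- `D₂[f,k,l] = −(Q[f]·k + conj(Q[f]·k))/2 = −Re (Q[f]·k)`. -/
def Dc2 (f : ℍ → ℍ) (k _l : ℍ) (p : ℝ × ℝ) : ℝ := -(Qsl f k p * k).re

/-- `D₃[f,k,l] = −(Q[f]·l + conj(Q[f]·l))/2 = −Re (Q[f]·l)`. -/
def Dc3 (f : ℍ → ℍ) (k l : ℍ) (p : ℝ × ℝ) : ℝ := -(Qsl f k p * l).re

/-- `D₄[f,k,l] = (Q[f]·lk + conj(Q[f]·lk))/2 = Re (Q[f]·(lk))`. -/
def Dc4 (f : ℍ → ℍ) (k l : ℍ) (p : ℝ × ℝ) : ℝ := (Qsl f k p * (l * k)).re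

/-- The section map `S_{k,l}[f] = ((D₁ D₂; D₃ D₄), (k,l))`. -/
def Smap (f : ℍ → ℍ) (k l : ℍ) : HLElem :=
  ⟨Dc1 f k l, Dc2 f k l, Dc3 f k l, Dc4 f k l, k, l⟩

/-- The metric `ρ_i` on `A_i(𝔹⁴) × T`. -/
def rhoA (i : ℍ) (f : ℍ → ℍ) (k l : ℍ) (g : ℍ → ℍ) (m n : ℍ) : ℝ :=
  bergNormB i (f - g) + Real.sqrt (‖k - m‖ ^ 2 + ‖l - n‖ ^ 2)

/-!
Since `{1, k, l, kl}` is an orthonormal basis of `ℍ` and `D₁, …, D₄` are the coordinates of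
`Q[f]` in it, `D₁ + D₂ k + D₃ l + D₄ kl` is just the restriction of `f` to the slice `ℂ(k)`, and the
claim is the representation formula for slice regular functions. To prove it at `x + yJ`, view `ℍ`
as a complex vector space through left multiplication by `ℂ(J)`. Left multiplication by `1 ± Jk`
carries the complex structure of `ℂ(∓k)` to that of `ℂ(J)`, so the difference of the two sides of
the formula is a holomorphic function on the unit disc; it vanishes on the real axis, hence
everywhere by the identity theorem.
-/

namespace Sph2

variable {u : ℍ}

theorem star_eq (hu : Sph2 u) : star u = -u := Quaternion.star_eq_neg.2 hu.1

theorem normSq_eq (hu : Sph2 u) : Quaternion.normSq u = 1 := by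
  rw [Quaternion.normSq_eq_norm_mul_self, hu.2, one_mul]

theorem mul_self (hu : Sph2 u) : u * u = -1 := by
  rw [← neg_eq_iff_eq_neg, ← mul_neg, ← hu.star_eq, Quaternion.self_mul_star, hu.normSq_eq,
    Quaternion.coe_one]

theorem neg (hu : Sph2 u) : Sph2 (-u) := ⟨by simp [hu.1], by simp [hu.2]⟩

theorem norm_coe_add_smul (hu : Sph2 u) (x y : ℝ) : ‖(x : ℍ) + y • u‖ ^ 2 = x ^ 2 + y ^ 2 := by
  rw [sq, ← Quaternion.normSq_eq_norm_mul_self, Quaternion.normSq_add, Quaternion.normSq_smul,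
    hu.normSq_eq, Quaternion.star_smul, hu.star_eq, Quaternion.normSq_coe]
  simp [hu.1]

end Sph2

theorem sph2_imu (q : ℍ) : Sph2 (Imu q) := by
  by_cases h : q.im = 0
  · have hI : Imu q = ⟨0, 1, 0, 0⟩ := if_pos h
    have h1 : Quaternion.normSq (Imu q) = 1 := by
      rw [Quaternion.normSq_def', hI]
      norm_num
    rw [Quaternion.normSq_eq_norm_mul_self] at h1
    exact ⟨hI ▸ rfl, by nlinarith [norm_nonneg (Imu q)]⟩
  · have hI : Imu q = ‖q.im‖⁻¹ • q.im := if_neg h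
    refine hI ▸ ⟨by simp, ?_⟩
    rw [norm_smul, norm_inv, norm_norm, inv_mul_cancel₀ (norm_ne_zero_iff.2 h)]

theorem re_add_norm_im_smul_imu (q : ℍ) : (q.re : ℍ) + ‖q.im‖ • Imu q = q := by
  by_cases h : q.im = 0
  · rw [h, norm_zero, zero_smul, add_zero]
    simpa [h] using Quaternion.re_add_im q
  · have hI : Imu q = ‖q.im‖⁻¹ • q.im := if_neg h
    rw [hI, smul_smul, mul_inv_cancel₀ (norm_ne_zero_iff.2 h), one_smul, Quaternion.re_add_im]

theorem OrthPair.orthonormal {k l : ℍ} (h : OrthPair k l) : Orthonormal ℝ ![1, k, l, k * l] := by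
  obtain ⟨hk, hl, hkl⟩ := h
  have hdot : k.imI * l.imI + k.imJ * l.imJ + k.imK * l.imK = 0 := by
    simpa [hk.1, hl.1] using hkl
  rw [orthonormal_iff_ite]
  intro i j
  fin_cases i <;> fin_cases j <;> simp [hk.2, hl.2, Quaternion.inner_def, hk.1, hl.1] <;>
    first | linear_combination hdot | linear_combination -hdot | ring1

theorem OrthPair.sum_repr {k l : ℍ} (h : OrthPair k l) (w : ℍ) :
    (w.re : ℍ) + (-(w * k).re) • k + (-(w * l).re) • l + (w * (l * k)).re • (k * l) = w := by
  have hon := h.orthonormal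
  obtain ⟨hk, hl, -⟩ := h
  have hspan := hon.linearIndependent.span_eq_top_of_card_eq_finrank
    (by rw [Fintype.card_fin, Quaternion.finrank_eq_four])
  conv_rhs => rw [← (OrthonormalBasis.mk hon hspan.ge).sum_repr' w]
  simp only [OrthonormalBasis.coe_mk, Fin.sum_univ_four, Matrix.cons_val, real_inner_comm w,
    Quaternion.inner_def, star_one, mul_one, star_mul, Sph2.star_eq hk, Sph2.star_eq hl, mul_neg,
    neg_mul, neg_neg, Quaternion.re_neg, ← Algebra.algebraMap_eq_smul_one,
    Quaternion.algebraMap_def]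

theorem sliceFun_dc_eq_qsl {k l : ℍ} (h : OrthPair k l) (f : ℍ → ℍ) :
    sliceFun (Dc1 f k l) (Dc2 f k l) (Dc3 f k l) (Dc4 f k l) k l = Qsl f k :=
  funext fun p => h.sum_repr (Qsl f k p)

def sliceEmbed (u : {u : ℍ // Sph2 u}) : ℂ →ₐ[ℝ] ℍ := Complex.liftAux u.1 (Sph2.mul_self u.2)

theorem sliceEmbed_apply (u : {u : ℍ // Sph2 u}) (z : ℂ) :
    sliceEmbed u z = (z.re : ℍ) + z.im • (u : ℍ) := by
  rw [sliceEmbed, Complex.liftAux_apply, Quaternion.algebraMap_def]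

theorem sliceEmbed_I (u : {u : ℍ // Sph2 u}) : sliceEmbed u Complex.I = u :=
  Complex.liftAux_apply_I _ _

theorem sliceEmbed_ofReal (u : {u : ℍ // Sph2 u}) (t : ℝ) : sliceEmbed u t = t := by
  simp only [AlgHom.map_coe_real_complex, Quaternion.algebraMap_def]

theorem norm_sliceEmbed (u : {u : ℍ // Sph2 u}) (z : ℂ) : ‖sliceEmbed u z‖ = ‖z‖ := by
  have h := Sph2.norm_coe_add_smul u.2 z.re z.im
  rw [← sliceEmbed_apply, ← Complex.normSq_add_mul_I, ← Complex.sq_norm, Complex.re_add_im] at h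
  exact (sq_eq_sq₀ (norm_nonneg _) (norm_nonneg _)).1 h

theorem mul_sliceEmbed_of_mul_eq {u J : {u : ℍ // Sph2 u}} {c : ℍ} (hc : c * u = J * c) (z : ℂ) :
    c * sliceEmbed u z = sliceEmbed J z * c := by
  simp only [sliceEmbed_apply, mul_add, add_mul, mul_smul_comm, smul_mul_assoc, hc,
    Quaternion.coe_mul_eq_smul, Quaternion.mul_coe_eq_smul]

/-- `ℍ` as a complex vector space, `z • q = (z.re + z.im J) q`. -/
def SliceQuat (_J : {u : ℍ // Sph2 u}) : Type := ℍ

namespace SliceQuat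

variable (J : {u : ℍ // Sph2 u})

instance : NormedAddCommGroup (SliceQuat J) := inferInstanceAs (NormedAddCommGroup ℍ)
instance : NormedSpace ℝ (SliceQuat J) := inferInstanceAs (NormedSpace ℝ ℍ)
instance : CompleteSpace (SliceQuat J) := inferInstanceAs (CompleteSpace ℍ)
instance : Module ℂ (SliceQuat J) := Module.compHom ℍ (sliceEmbed J).toRingHom

theorem smul_def (z : ℂ) (q : SliceQuat J) :
    z • q = show ℍ from sliceEmbed J z * show ℍ from q := rfl

instance : NormedSpace ℂ (SliceQuat J) where
  norm_smul_le z q := by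
    rw [smul_def]
    exact (norm_mul_le _ _).trans_eq (congrArg (· * ‖q‖) (norm_sliceEmbed J z))

instance : IsScalarTower ℝ ℂ (SliceQuat J) where
  smul_assoc r z q := by
    rw [smul_def, smul_def, map_smul, smul_mul_assoc]
    rfl

variable {J}

theorem differentiableAt_of_hasFDerivAt {F : ℂ → ℍ} {D : ℂ →L[ℝ] ℍ} {z : ℂ}
    (hF : HasFDerivAt F D z) (hD : D Complex.I = J * D 1) :
    DifferentiableAt ℂ (fun w => show SliceQuat J from F w) z := by
  let D' : ℂ →L[ℂ] SliceQuat J := (ContinuousLinearMap.id ℂ ℂ).smulRight (show SliceQuat J from D 1)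
  refine (hasFDerivAt_of_restrictScalars ℝ (f' := D') (g' := D) hF ?_).differentiableAt
  refine ContinuousLinearMap.coe_injective (Complex.basisOneI.ext fun i => ?_)
  fin_cases i
  · simp only [Complex.coe_basisOneI]
    exact one_smul ℂ (show SliceQuat J from D 1)
  · simp only [Complex.coe_basisOneI]
    show Complex.I • (show SliceQuat J from D 1) = D Complex.I
    rw [smul_def, sliceEmbed_apply, hD]
    simp only [Complex.I_re, Complex.I_im, Quaternion.coe_zero, zero_add, one_smul]
    rfl

def leftMul {u : {u : ℍ // Sph2 u}} (c : ℍ) (hc : c * u = J * c) :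
    SliceQuat u →L[ℂ] SliceQuat J where
  toFun q := show ℍ from c * show ℍ from q
  map_add' q r := mul_add c q r
  map_smul' z q := by
    change c * (sliceEmbed u z * show ℍ from q) = sliceEmbed J z * (c * show ℍ from q)
    rw [← mul_assoc, ← mul_assoc, mul_sliceEmbed_of_mul_eq hc]
  cont := continuous_const_mul c

end SliceQuat

open Topology in
theorem eqOn_zero_of_differentiableOn_of_real {E : Type*} [NormedAddCommGroup E]
    [NormedSpace ℂ E] [CompleteSpace E] {U : Set ℂ} {H : ℂ → E} (hUo : IsOpen U)
    (hUc : IsPreconnected U) (hU0 : (0 : ℂ) ∈ U) (hH : DifferentiableOn ℂ H U)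
    (hreal : ∀ t : ℝ, H t = 0) : Set.EqOn H 0 U := by
  have hfreq : ∃ᶠ z in 𝓝[≠] (0 : ℂ), H z = 0 := by
    have hofReal : Tendsto ((↑) : ℝ → ℂ) (𝓝[≠] 0) (𝓝[≠] 0) :=
      Complex.continuous_ofReal.continuousWithinAt.tendsto_nhdsWithin
        fun t ht => Complex.ofReal_ne_zero.2 ht
    exact hofReal.frequently (Frequently.of_forall hreal)
  exact (hH.analyticOnNhd hUo).eqOn_zero_of_preconnected_of_frequently_eq_zero hUc hU0 hfreq

theorem eq_mul_of_add_mul_eq_zero {R : Type*} [Ring R] {u a b : R} (hu : u * u = -1)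
    (h : a + u * b = 0) : b = u * a := by
  rw [eq_neg_of_add_eq_zero_left h, mul_neg, ← mul_assoc, hu, neg_one_mul, neg_neg]

section TwoUnits

variable {R : Type*} [Ring R] {J k : R}

theorem one_add_mul_mul_neg (hJ : J * J = -1) (hk : k * k = -1) :
    (1 + J * k) * -k = J * (1 + J * k) := by
  rw [mul_neg, add_mul, one_mul, mul_assoc, hk, mul_add, mul_one, ← mul_assoc, hJ]
  noncomm_ring

theorem one_sub_mul_mul (hJ : J * J = -1) (hk : k * k = -1) :
    (1 - J * k) * k = J * (1 - J * k) := by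
  rw [sub_mul, one_mul, mul_assoc, hk, mul_sub, mul_one, ← mul_assoc, hJ]
  noncomm_ring

end TwoUnits

namespace SliceRegularOn

variable {f : ℍ → ℍ}

theorem differentiableAt_sliceEmbed (hf : SliceRegularOn f B4) (u : {u : ℍ // Sph2 u}) {z : ℂ}
    (hz : ‖z‖ < 1) : DifferentiableAt ℂ (fun w => show SliceQuat u from f (sliceEmbed u w)) z := by
  let L : ℂ →L[ℝ] ℍ := (sliceEmbed u).toLinearMap.toContinuousLinearMap
  have hmem : (z.re : ℍ) + z.im • (u : ℍ) ∈ B4 := by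
    rw [← sliceEmbed_apply]
    exact (norm_sliceEmbed u z).trans_lt hz
  obtain ⟨hdiff, hcr⟩ := hf u.2 z.re z.im hmem
  rw [← sliceEmbed_apply] at hdiff hcr
  refine SliceQuat.differentiableAt_of_hasFDerivAt (hdiff.hasFDerivAt.comp z L.hasFDerivAt) ?_
  have hL1 : L 1 = 1 := map_one (sliceEmbed u)
  have hLI : L Complex.I = u := sliceEmbed_I u
  simp only [ContinuousLinearMap.comp_apply, hL1, hLI]
  exact eq_mul_of_add_mul_eq_zero (Sph2.mul_self u.2) hcr

theorem representation_formula (hf : SliceRegularOn f B4) {k J : ℍ} (hk : Sph2 k) (hJ : Sph2 J)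
    {x y : ℝ} (hxy : x ^ 2 + y ^ 2 < 1) :
    f (x + y • J) = (2⁻¹ : ℝ) • ((1 + J * k) * f (x + (-y) • k) + (1 - J * k) * f (x + y • k)) := by
  let k' : {u : ℍ // Sph2 u} := ⟨k, hk⟩
  let nk : {u : ℍ // Sph2 u} := ⟨-k, hk.neg⟩
  let J' : {u : ℍ // Sph2 u} := ⟨J, hJ⟩
  have hplus := one_add_mul_mul_neg hJ.mul_self hk.mul_self
  have hminus := one_sub_mul_mul hJ.mul_self hk.mul_self
  let H : ℂ → SliceQuat J' := fun z =>
    (2⁻¹ : ℝ) • (SliceQuat.leftMul (u := nk) (1 + J * k) hplus (f (sliceEmbed nk z))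
      + SliceQuat.leftMul (u := k') (1 - J * k) hminus (f (sliceEmbed k' z)))
      - show SliceQuat J' from f (sliceEmbed J' z)
  have hH : DifferentiableOn ℂ H (Metric.ball 0 1) := fun z hz => by
    rw [mem_ball_zero_iff] at hz
    exact ((((SliceQuat.leftMul _ hplus).differentiableAt.comp z
      (hf.differentiableAt_sliceEmbed nk hz)).add
      ((SliceQuat.leftMul _ hminus).differentiableAt.comp z
      (hf.differentiableAt_sliceEmbed k' hz))).const_smul (2⁻¹ : ℝ)).sub
      (hf.differentiableAt_sliceEmbed J' hz) |>.differentiableWithinAt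
  have hreal : ∀ t : ℝ, H t = 0 := fun t => by
    change (2⁻¹ : ℝ) • ((1 + J * k) * f (sliceEmbed nk t) + (1 - J * k) * f (sliceEmbed k' t))
      - f (sliceEmbed J' t) = 0
    rw [sliceEmbed_ofReal, sliceEmbed_ofReal, sliceEmbed_ofReal, ← add_mul,
      add_add_sub_cancel, add_mul, one_mul, ← two_smul ℝ, smul_smul, inv_mul_cancel₀ two_ne_zero,
      one_smul, sub_self]
  have hz : (⟨x, y⟩ : ℂ) ∈ Metric.ball 0 1 := by
    rw [mem_ball_zero_iff, ← sq_lt_one_iff₀ (norm_nonneg _), Complex.sq_norm, Complex.normSq_mk]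
    nlinarith
  have hH0 : H ⟨x, y⟩ = 0 := eqOn_zero_of_differentiableOn_of_real Metric.isOpen_ball
    (convex_ball 0 1).isPreconnected (Metric.mem_ball_self one_pos) hH hreal hz
  change (2⁻¹ : ℝ) • ((1 + J * k) * f (sliceEmbed nk ⟨x, y⟩)
      + (1 - J * k) * f (sliceEmbed k' ⟨x, y⟩)) - f (sliceEmbed J' ⟨x, y⟩) = 0 at hH0
  rw [sub_eq_zero, sliceEmbed_apply, sliceEmbed_apply, sliceEmbed_apply] at hH0
  simpa [nk, smul_neg] using hH0.symm

theorem pext_qsl_eq (hf : SliceRegularOn f B4) {k : ℍ} (hk : Sph2 k) {q : ℍ} (hq : q ∈ B4) :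
    Pext k (Qsl f k) q = f q := by
  have hnorm : q.re ^ 2 + ‖q.im‖ ^ 2 < 1 := by
    rw [← Sph2.norm_coe_add_smul (sph2_imu q), re_add_norm_im_smul_imu]
    exact pow_lt_one₀ (norm_nonneg q) hq two_ne_zero
  conv_rhs => rw [← re_add_norm_im_smul_imu q]
  exact (hf.representation_formula hk (sph2_imu q) hnorm).symm

end SliceRegularOn

theorem section_property_general (i k l : ℍ) (hkl : OrthPair k l)
    (f : ℍ → ℍ) (hf : MemBergB i f) :
    ∀ q ∈ B4,
      Pext k (sliceFun (Dc1 f k l) (Dc2 f k l) (Dc3 f k l) (Dc4 f k l) k l) q = f q := by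
  intro q hq
  rw [sliceFun_dc_eq_qsl hkl]
  exact hf.1.pext_qsl_eq hkl.1 hq

/-- Section property: `P_{𝔹⁴}(S_{k,l}[f]) = f` on `𝔹⁴`, i.e.
`P_{k,l}[D₁ + D₂ k + D₃ l + D₄ kl] = f`. -/
theorem section_property (i k l : ℍ) (hi : Sph2 i) (hkl : OrthPair k l)
    (f : ℍ → ℍ) (hf : MemBergB i f) :
    ∀ q ∈ B4,
      Pext k (sliceFun (Dc1 f k l) (Dc2 f k l) (Dc3 f k l) (Dc4 f k l) k l) q = f q :=
  section_property_general i k l hkl f hf
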